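/- arXiv:2008.01024 — 3 statements merged into one kernel-verified Lean document; each statement's English description precedes it below -/
import Mathlib

section
/- Let Ã(0), …, Ã(T) ∈ ℝ^{n×n} be entrywise nonnegative, let the entries of K̃(k;·) be nonnegative posynomials of θ ∈ ℝ^m_{>0}, let x(0) ∈ ℝ^n be entrywise nonnegative, let ℓ(k) ∈ ℝ^n be entrywise positive, and define x(k;θ) = (Ã(k−1)+K̃(k−1;θ))⋯(Ã(0)+K̃(0;θ))x(0). Fix 1 ≤ k ≤ T+1 and assume x(k;exp[z])^⊤ ℓ(k) > 0 for all z ∈ ℝ^m. Then the finite-time stability constraint function z ↦ log(x(k;exp[z])^⊤ ℓ(k)) is convex on ℝ^m. -/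
/-!
In the coordinates `θ = exp z` a nonnegative posynomial becomes `F z = ∑ j, c j * exp (a j ⬝ᵥ z)`.
Each term is log-affine in `z`, so Hölder's inequality with the conjugate exponents `1/p`, `1/q`
gives `F (p • x + q • y) ≤ F x ^ p * F y ^ q`, which is the convexity of `log ∘ F`.
Nonnegative posynomials are closed under sums and products, so by induction on `k` every entry of
`x(k;θ)`, and hence `x(k;θ)ᵀ ℓ(k)`, is one.
-/

/-- A nonnegative posynomial on the positive orthant: a finite sum of monomials
with nonnegative coefficients and real exponents (possibly the zero function). -/
def IsNonnegPosynomial (m : ℕ) (f : (Fin m → ℝ) → ℝ) : Prop :=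
  ∃ (N : ℕ) (c : Fin N → ℝ) (a : Fin N → Fin m → ℝ),
    (∀ j, 0 ≤ c j) ∧
    ∀ v : Fin m → ℝ, (∀ i, 0 < v i) → f v = ∑ j, c j * ∏ i, (v i) ^ (a j i)

/-- The state trajectory of the parametrized system
x(k+1;θ) = (Ã(k) + K̃(k;θ)) x(k;θ), x(0;θ) = x(0). -/
def paramTraj (n m : ℕ) (Atil : ℕ → Matrix (Fin n) (Fin n) ℝ)
    (Ktil : ℕ → (Fin m → ℝ) → Matrix (Fin n) (Fin n) ℝ)
    (x0 : Fin n → ℝ) : ℕ → (Fin m → ℝ) → Fin n → ℝ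
  | 0, _ => x0
  | k + 1, θ => (Atil k + Ktil k θ).mulVec (paramTraj n m Atil Ktil x0 k θ)

open Real Finset

theorem Real.sum_rpow_mul_rpow_le_of_nonneg {ι : Type*} (s : Finset ι) {f g : ι → ℝ}
    (hf : ∀ i ∈ s, 0 ≤ f i) (hg : ∀ i ∈ s, 0 ≤ g i) {p q : ℝ} (hp : 0 < p) (hq : 0 < q)
    (hpq : p + q = 1) :
    ∑ i ∈ s, f i ^ p * g i ^ q ≤ (∑ i ∈ s, f i) ^ p * (∑ i ∈ s, g i) ^ q := by
  have holder := inner_le_Lp_mul_Lq_of_nonneg s (HolderConjugate.inv_inv hp hq hpq)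
    (fun i hi => rpow_nonneg (hf i hi) p) (fun i hi => rpow_nonneg (hg i hi) q)
  simp only [one_div, inv_inv] at holder
  rwa [sum_congr rfl fun i hi => rpow_rpow_inv (hf i hi) hp.ne',
    sum_congr rfl fun i hi => rpow_rpow_inv (hg i hi) hq.ne'] at holder

theorem convexOn_log_of_le_rpow_mul_rpow {E : Type*} [AddCommMonoid E] [Module ℝ E]
    {s : Set E} (hs : Convex ℝ s) {F : E → ℝ} (hF : ∀ x ∈ s, 0 < F x)
    (h : ∀ x ∈ s, ∀ y ∈ s, ∀ ⦃p q : ℝ⦄, 0 < p → 0 < q → p + q = 1 →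
      F (p • x + q • y) ≤ F x ^ p * F y ^ q) :
    ConvexOn ℝ s (fun x => log (F x)) := by
  refine ⟨hs, fun x hx y hy p q hp hq hpq => ?_⟩
  rcases hp.eq_or_lt with rfl | hp
  · rw [zero_add] at hpq
    simp [hpq]
  rcases hq.eq_or_lt with rfl | hq
  · rw [add_zero] at hpq
    simp [hpq]
  have hFx := hF x hx
  have hFy := hF y hy
  calc log (F (p • x + q • y)) ≤ log (F x ^ p * F y ^ q) :=
        log_le_log (hF _ (hs hx hy hp.le hq.le hpq)) (h x hx y hy hp hq hpq)
    _ = p • log (F x) + q • log (F y) := by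
        rw [log_mul (by positivity) (by positivity), log_rpow hFx, log_rpow hFy,
          smul_eq_mul, smul_eq_mul]

section SumMulExp

variable {E ι : Type*} [AddCommGroup E] [Module ℝ E]

theorem mul_exp_map_smul_add_smul {c : ℝ} (hc : 0 ≤ c) (φ : E →ₗ[ℝ] ℝ) (x y : E)
    {p q : ℝ} (hpq : p + q = 1) :
    c * exp (φ (p • x + q • y)) = (c * exp (φ x)) ^ p * (c * exp (φ y)) ^ q := by
  have hc_eq : c = c ^ p * c ^ q := by
    rw [← rpow_add' hc (by simp [hpq]), hpq, rpow_one]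
  rw [mul_rpow hc (exp_nonneg _), mul_rpow hc (exp_nonneg _), ← exp_mul, ← exp_mul,
    map_add, map_smul, map_smul, smul_eq_mul, smul_eq_mul, mul_comm p, mul_comm q, exp_add]
  nth_rw 1 [hc_eq]
  ring

theorem convexOn_log_sum_mul_exp [Fintype ι] {c : ι → ℝ} (hc : ∀ j, 0 ≤ c j)
    (φ : ι → E →ₗ[ℝ] ℝ) (hpos : ∀ x, 0 < ∑ j, c j * exp (φ j x)) :
    ConvexOn ℝ Set.univ (fun x => log (∑ j, c j * exp (φ j x))) := by
  refine convexOn_log_of_le_rpow_mul_rpow convex_univ (fun x _ => hpos x)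
    fun x _ y _ p q hp hq hpq => ?_
  simp_rw [mul_exp_map_smul_add_smul (hc _) _ x y hpq]
  have hterm (x : E) (j : ι) : 0 ≤ c j * exp (φ j x) := mul_nonneg (hc j) (exp_nonneg _)
  exact sum_rpow_mul_rpow_le_of_nonneg _ (fun j _ => hterm x j) (fun j _ => hterm y j) hp hq hpq

end SumMulExp

namespace IsNonnegPosynomial

variable {m : ℕ} {f g : (Fin m → ℝ) → ℝ}

theorem const {c : ℝ} (hc : 0 ≤ c) : IsNonnegPosynomial m (fun _ => c) :=
  ⟨1, fun _ => c, fun _ _ => 0, fun _ => hc, fun v _ => by simp⟩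

theorem add (hf : IsNonnegPosynomial m f) (hg : IsNonnegPosynomial m g) :
    IsNonnegPosynomial m (fun v => f v + g v) := by
  obtain ⟨N₁, c₁, a₁, hc₁, hf⟩ := hf
  obtain ⟨N₂, c₂, a₂, hc₂, hg⟩ := hg
  refine ⟨N₁ + N₂, Fin.append c₁ c₂, Fin.append a₁ a₂, fun j => ?_, fun v hv => ?_⟩
  · refine Fin.addCases (fun j => ?_) (fun j => ?_) j
    · simpa only [Fin.append_left] using hc₁ j
    · simpa only [Fin.append_right] using hc₂ j
  · simp only [hf v hv, hg v hv, Fin.sum_univ_add, Fin.append_left, Fin.append_right]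

theorem mul (hf : IsNonnegPosynomial m f) (hg : IsNonnegPosynomial m g) :
    IsNonnegPosynomial m (fun v => f v * g v) := by
  obtain ⟨N₁, c₁, a₁, hc₁, hf⟩ := hf
  obtain ⟨N₂, c₂, a₂, hc₂, hg⟩ := hg
  let e : Fin (N₁ * N₂) ≃ Fin N₁ × Fin N₂ := finProdFinEquiv.symm
  refine ⟨N₁ * N₂, fun j => c₁ (e j).1 * c₂ (e j).2, fun j i => a₁ (e j).1 i + a₂ (e j).2 i,
    fun j => mul_nonneg (hc₁ _) (hc₂ _), fun v hv => ?_⟩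
  have hmonomial (j₁ : Fin N₁) (j₂ : Fin N₂) :
      ∏ i, v i ^ (a₁ j₁ i + a₂ j₂ i) = (∏ i, v i ^ a₁ j₁ i) * ∏ i, v i ^ a₂ j₂ i := by
    rw [← prod_mul_distrib]
    exact prod_congr rfl fun i _ => rpow_add (hv i) _ _
  dsimp only
  rw [hf v hv, hg v hv, sum_mul_sum, ← Fintype.sum_prod_type']
  refine Fintype.sum_equiv e.symm _ _ fun ⟨j₁, j₂⟩ => ?_
  simp only [e, Equiv.symm_symm, Equiv.symm_apply_apply, hmonomial]
  ring

theorem sum {ι : Type*} (s : Finset ι) {F : ι → (Fin m → ℝ) → ℝ}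
    (hF : ∀ j ∈ s, IsNonnegPosynomial m (F j)) :
    IsNonnegPosynomial m (fun v => ∑ j ∈ s, F j v) := by
  classical
  induction s using Finset.induction with
  | empty => simpa using const (m := m) le_rfl
  | insert j s hj ih =>
    simp_rw [sum_insert hj]
    exact (hF j (mem_insert_self j s)).add (ih fun i hi => hF i (mem_insert_of_mem hi))

theorem exists_comp_exp_eq_sum_mul_exp (hf : IsNonnegPosynomial m f) :
    ∃ (N : ℕ) (c : Fin N → ℝ) (φ : Fin N → Module.Dual ℝ (Fin m → ℝ)), (∀ j, 0 ≤ c j) ∧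
      ∀ z, f (fun i => exp (z i)) = ∑ j, c j * exp (φ j z) := by
  obtain ⟨N, c, a, hc, hf⟩ := hf
  refine ⟨N, c, fun j => dotProductBilin ℝ ℝ (a j), hc, fun z => ?_⟩
  rw [hf _ fun i => exp_pos (z i)]
  refine sum_congr rfl fun j _ => ?_
  simp only [dotProductBilin_apply_apply, dotProduct, exp_sum, ← exp_mul, mul_comm (a j _)]

theorem convexOn_log_comp_exp (hf : IsNonnegPosynomial m f)
    (hpos : ∀ z : Fin m → ℝ, 0 < f (fun i => exp (z i))) :
    ConvexOn ℝ Set.univ (fun z : Fin m → ℝ => log (f (fun i => exp (z i)))) := by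
  obtain ⟨N, c, φ, hc, hf⟩ := hf.exists_comp_exp_eq_sum_mul_exp
  simp only [hf] at hpos ⊢
  exact convexOn_log_sum_mul_exp hc φ hpos

end IsNonnegPosynomial

theorem isNonnegPosynomial_paramTraj {n m T : ℕ} {Atil : ℕ → Matrix (Fin n) (Fin n) ℝ}
    {Ktil : ℕ → (Fin m → ℝ) → Matrix (Fin n) (Fin n) ℝ}
    (hA : ∀ k ≤ T, ∀ i j, 0 ≤ Atil k i j)
    (hK : ∀ k ≤ T, ∀ i j, IsNonnegPosynomial m (fun θ => Ktil k θ i j))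
    {x0 : Fin n → ℝ} (hx0 : ∀ i, 0 ≤ x0 i) {k : ℕ} (hk : k ≤ T + 1) (i : Fin n) :
    IsNonnegPosynomial m (fun θ => paramTraj n m Atil Ktil x0 k θ i) := by
  induction k generalizing i with
  | zero => exact .const (hx0 i)
  | succ k ih =>
    have hkT : k ≤ T := Nat.le_of_succ_le_succ hk
    change IsNonnegPosynomial m fun θ =>
      ∑ j, (Atil k i j + Ktil k θ i j) * paramTraj n m Atil Ktil x0 k θ j
    exact .sum _ fun j _ => ((IsNonnegPosynomial.const (hA k hkT i j)).add (hK k hkT i j)).mul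
      (ih (Nat.le_of_succ_le hk) j)

/-- Under nonnegativity of the Ã(k), posynomiality of the entries of
K̃(k;·), nonnegativity of x(0), entrywise positivity of ℓ(k), and positivity of
x(k;exp[z])^⊤ℓ(k), the finite-time stability constraint function
z ↦ log(x(k;exp[z])^⊤ ℓ(k)) is convex on ℝ^m, for fixed 1 ≤ k ≤ T+1. -/
theorem constraint_function_log_convex
    (n m T : ℕ) (Atil : ℕ → Matrix (Fin n) (Fin n) ℝ)
    (Ktil : ℕ → (Fin m → ℝ) → Matrix (Fin n) (Fin n) ℝ)
    (hA : ∀ k ≤ T, ∀ i j, 0 ≤ Atil k i j)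
    (hK : ∀ k ≤ T, ∀ i j, IsNonnegPosynomial m (fun θ => Ktil k θ i j))
    (x0 : Fin n → ℝ) (hx0 : ∀ i, 0 ≤ x0 i)
    (ℓ : ℕ → Fin n → ℝ) (hℓ : ∀ k, 1 ≤ k → k ≤ T + 1 → ∀ i, 0 < ℓ k i)
    (k : ℕ) (hk1 : 1 ≤ k) (hk2 : k ≤ T + 1)
    (hpos : ∀ z : Fin m → ℝ,
      0 < ∑ i, paramTraj n m Atil Ktil x0 k (fun i => Real.exp (z i)) i * ℓ k i) :
    ConvexOn ℝ Set.univ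
      (fun z : Fin m → ℝ =>
        Real.log (∑ i, paramTraj n m Atil Ktil x0 k (fun i => Real.exp (z i)) i * ℓ k i)) := by
  refine IsNonnegPosynomial.convexOn_log_comp_exp
    (f := fun θ => ∑ i, paramTraj n m Atil Ktil x0 k θ i * ℓ k i) ?_ hpos
  exact .sum _ fun i _ =>
    (isNonnegPosynomial_paramTraj hA hK hx0 hk2 i).mul (.const (hℓ k hk1 hk2 i).le)
end

section
/- Let Ã(0), …, Ã(T) ∈ ℝ^{n×n} be entrywise nonnegative, let the entries of K̃(k;·) be nonnegative posynomials of θ ∈ ℝ^m_{>0}, let x(0) ∈ ℝ^n be entrywise nonnegative, and define x(k;θ) = (Ã(k−1)+K̃(k−1;θ))⋯(Ã(0)+K̃(0;θ))x(0). Let p > 0 and assume x_i(k;exp[z]) > 0 for all z ∈ ℝ^m, all 1 ≤ k ≤ T+1, and all i ∈ {1,…,n}. Then the log-transformed ℓ^p performance objective z ↦ log((∑_{k=1}^{T+1} ∑_{i=1}^n x_i(k;exp[z])^p)^{1/p}) is convex on ℝ^m. -/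
/-!
In the coordinates `θ = exp z` a monomial `c ∏ θᵢ ^ aᵢ` becomes `c · exp ⟨a, z⟩`, which is
log-convex, and log-convexity is preserved by sums (Hölder's inequality), products and nonnegative
powers. Since every state `xᵢ(k; exp z)` is built from the posynomial gains by sums and products,
it is log-convex in `z`, and so is `∑ₖ ∑ᵢ xᵢ(k; exp z) ^ p`; as this sum is positive, its logarithm,
`p` times the objective, is convex.
-/

open Real Matrix

/-- Hölder's inequality for the exponents `1 / a` and `1 / b`. -/
theorem Finset.sum_rpow_mul_rpow_le {ι : Type*} (t : Finset ι) {f g : ι → ℝ}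
    (hf : ∀ i ∈ t, 0 ≤ f i) (hg : ∀ i ∈ t, 0 ≤ g i) {a b : ℝ} (ha : 0 ≤ a) (hb : 0 ≤ b)
    (hab : a + b = 1) :
    ∑ i ∈ t, f i ^ a * g i ^ b ≤ (∑ i ∈ t, f i) ^ a * (∑ i ∈ t, g i) ^ b := by
  rcases ha.eq_or_lt with rfl | ha
  · simp [show b = 1 by linarith]
  rcases hb.eq_or_lt with rfl | hb
  · simp [show a = 1 by linarith]
  have key := inner_le_Lp_mul_Lq_of_nonneg t (HolderConjugate.inv_inv ha hb hab)
    (fun i hi => rpow_nonneg (hf i hi) a) (fun i hi => rpow_nonneg (hg i hi) b)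
  have hf' : ∀ i ∈ t, (f i ^ a) ^ a⁻¹ = f i := fun i hi => rpow_rpow_inv (hf i hi) ha.ne'
  have hg' : ∀ i ∈ t, (g i ^ b) ^ b⁻¹ = g i := fun i hi => rpow_rpow_inv (hg i hi) hb.ne'
  rwa [Finset.sum_congr rfl hf', Finset.sum_congr rfl hg', one_div, one_div, inv_inv,
    inv_inv] at key

theorem le_rpow_mul_rpow_of_add_eq_one {c a b : ℝ} (hc : 0 ≤ c) (hab : a + b = 1) :
    c ≤ c ^ a * c ^ b := by
  rcases hc.eq_or_lt with rfl | hc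
  · positivity
  · rw [← rpow_add hc, hab, rpow_one]

variable {E : Type*} [AddCommGroup E] [Module ℝ E] {s : Set E} {f g : E → ℝ}

/-- Log-convexity in multiplicative form; unlike convexity of `log ∘ f`, it allows `f` to vanish. -/
structure LogConvexOn (s : Set E) (f : E → ℝ) : Prop where
  convex : Convex ℝ s
  nonneg : ∀ x ∈ s, 0 ≤ f x
  le_rpow_mul_rpow : ∀ ⦃x⦄, x ∈ s → ∀ ⦃y⦄, y ∈ s → ∀ ⦃a b : ℝ⦄, 0 ≤ a → 0 ≤ b → a + b = 1 →
    f (a • x + b • y) ≤ f x ^ a * f y ^ b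

namespace LogConvexOn

theorem const (hs : Convex ℝ s) {c : ℝ} (hc : 0 ≤ c) : LogConvexOn s fun _ => c :=
  ⟨hs, fun _ _ => hc, fun _ _ _ _ _ _ _ _ hab => le_rpow_mul_rpow_of_add_eq_one hc hab⟩

theorem sum {ι : Type*} (hs : Convex ℝ s) {t : Finset ι} {f : ι → E → ℝ}
    (hf : ∀ i ∈ t, LogConvexOn s (f i)) : LogConvexOn s fun x => ∑ i ∈ t, f i x where
  convex := hs
  nonneg x hx := Finset.sum_nonneg fun i hi => (hf i hi).nonneg x hx
  le_rpow_mul_rpow x hx y hy _ _ ha hb hab :=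
    (Finset.sum_le_sum fun i hi => (hf i hi).le_rpow_mul_rpow hx hy ha hb hab).trans <|
      Finset.sum_rpow_mul_rpow_le t (fun i hi => (hf i hi).nonneg x hx)
        (fun i hi => (hf i hi).nonneg y hy) ha hb hab

theorem add (hf : LogConvexOn s f) (hg : LogConvexOn s g) : LogConvexOn s fun x => f x + g x := by
  simpa [Fin.sum_univ_two] using
    sum (t := Finset.univ) (f := ![f, g]) hf.convex fun i _ => by fin_cases i <;> assumption

theorem mul (hf : LogConvexOn s f) (hg : LogConvexOn s g) : LogConvexOn s fun x => f x * g x where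
  convex := hf.convex
  nonneg x hx := mul_nonneg (hf.nonneg x hx) (hg.nonneg x hx)
  le_rpow_mul_rpow x hx y hy a b ha hb hab := by
    have hxy := hf.convex hx hy ha hb hab
    calc f (a • x + b • y) * g (a • x + b • y)
        ≤ (f x ^ a * f y ^ b) * (g x ^ a * g y ^ b) :=
          mul_le_mul (hf.le_rpow_mul_rpow hx hy ha hb hab) (hg.le_rpow_mul_rpow hx hy ha hb hab)
            (hg.nonneg _ hxy) (by have := hf.nonneg x hx; have := hf.nonneg y hy; positivity)
      _ = (f x * g x) ^ a * (f y * g y) ^ b := by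
          rw [mul_rpow (hf.nonneg x hx) (hg.nonneg x hx),
            mul_rpow (hf.nonneg y hy) (hg.nonneg y hy)]
          ring

theorem prod {ι : Type*} (hs : Convex ℝ s) {t : Finset ι} {f : ι → E → ℝ}
    (hf : ∀ i ∈ t, LogConvexOn s (f i)) : LogConvexOn s fun x => ∏ i ∈ t, f i x := by
  rw [← Finset.prod_fn]
  exact Finset.prod_induction f (LogConvexOn s) (fun _ _ => mul) (const hs zero_le_one) hf

theorem rpow (hf : LogConvexOn s f) {p : ℝ} (hp : 0 ≤ p) : LogConvexOn s fun x => f x ^ p where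
  convex := hf.convex
  nonneg x hx := rpow_nonneg (hf.nonneg x hx) p
  le_rpow_mul_rpow x hx y hy a b ha hb hab := by
    have hfx := hf.nonneg x hx
    have hfy := hf.nonneg y hy
    calc f (a • x + b • y) ^ p
        ≤ (f x ^ a * f y ^ b) ^ p :=
          rpow_le_rpow (hf.nonneg _ (hf.convex hx hy ha hb hab))
            (hf.le_rpow_mul_rpow hx hy ha hb hab) hp
      _ = (f x ^ p) ^ a * (f y ^ p) ^ b := by
          rw [mul_rpow (rpow_nonneg hfx a) (rpow_nonneg hfy b), ← rpow_mul hfx, ← rpow_mul hfy,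
            ← rpow_mul hfx, ← rpow_mul hfy, mul_comm a, mul_comm b]

theorem mulVec {m n : Type*} [Fintype n] (hs : Convex ℝ s) {M : E → Matrix m n ℝ}
    {v : E → n → ℝ} (hM : ∀ i j, LogConvexOn s fun x => M x i j)
    (hv : ∀ j, LogConvexOn s fun x => v x j) (i : m) : LogConvexOn s fun x => (M x *ᵥ v x) i :=
  sum hs fun j _ => (hM i j).mul (hv j)

theorem convexOn_log (hf : LogConvexOn s f) (hpos : ∀ x ∈ s, 0 < f x) :
    ConvexOn ℝ s fun x => log (f x) := by
  refine ⟨hf.convex, fun x hx y hy a b ha hb hab => ?_⟩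
  calc log (f (a • x + b • y))
      ≤ log (f x ^ a * f y ^ b) :=
        log_le_log (hpos _ (hf.convex hx hy ha hb hab)) (hf.le_rpow_mul_rpow hx hy ha hb hab)
    _ = a • log (f x) + b • log (f y) := by
        rw [log_mul (rpow_pos_of_pos (hpos x hx) a).ne' (rpow_pos_of_pos (hpos y hy) b).ne',
          log_rpow (hpos x hx), log_rpow (hpos y hy), smul_eq_mul, smul_eq_mul]

end LogConvexOn

theorem ConvexOn.logConvexOn_exp (hg : ConvexOn ℝ s g) : LogConvexOn s fun x => exp (g x) where
  convex := hg.1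
  nonneg _ _ := (exp_pos _).le
  le_rpow_mul_rpow x hx y hy a b ha hb hab := by
    rw [← exp_mul, ← exp_mul, ← exp_add, mul_comm (g x), mul_comm (g y)]
    exact exp_le_exp.2 (hg.2 hx hy ha hb hab)

theorem logConvexOn_exp_apply_rpow {ι : Type*} (i : ι) (r : ℝ) :
    LogConvexOn Set.univ fun z : ι → ℝ => exp (z i) ^ r := by
  have hlin : ConvexOn ℝ Set.univ fun z : ι → ℝ => z i * r :=
    ((LinearMap.proj i : (ι → ℝ) →ₗ[ℝ] ℝ).smulRight r).convexOn convex_univ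
  simpa only [← exp_mul] using hlin.logConvexOn_exp

theorem IsNonnegPosynomial.logConvexOn_comp_exp {m : ℕ} {f : (Fin m → ℝ) → ℝ}
    (hf : IsNonnegPosynomial m f) :
    LogConvexOn Set.univ fun z : Fin m → ℝ => f fun i => exp (z i) := by
  obtain ⟨N, c, a, hc, hf⟩ := hf
  have hmono : (fun z : Fin m → ℝ => f fun i => exp (z i)) =
      fun z => ∑ j, c j * ∏ i, exp (z i) ^ a j i :=
    funext fun z => hf _ fun i => exp_pos (z i)
  rw [hmono]
  exact .sum convex_univ fun j _ => (LogConvexOn.const convex_univ (hc j)).mul <|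
    .prod convex_univ fun i _ => logConvexOn_exp_apply_rpow i (a j i)

theorem paramTraj_comp_exp_logConvexOn {n m T : ℕ} {Atil : ℕ → Matrix (Fin n) (Fin n) ℝ}
    {Ktil : ℕ → (Fin m → ℝ) → Matrix (Fin n) (Fin n) ℝ} {x0 : Fin n → ℝ}
    (hA : ∀ k ≤ T, ∀ i j, 0 ≤ Atil k i j)
    (hK : ∀ k ≤ T, ∀ i j, IsNonnegPosynomial m (fun θ => Ktil k θ i j)) (hx0 : ∀ i, 0 ≤ x0 i) :
    ∀ k ≤ T + 1, ∀ i, LogConvexOn Set.univ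
      fun z : Fin m → ℝ => paramTraj n m Atil Ktil x0 k (fun i => exp (z i)) i
  | 0, _, i => .const convex_univ (hx0 i)
  | k + 1, hk, i =>
    .mulVec convex_univ (fun i j => (LogConvexOn.const convex_univ (hA k (by omega) i j)).add
        (hK k (by omega) i j).logConvexOn_comp_exp)
      (paramTraj_comp_exp_logConvexOn hA hK hx0 k (by omega)) i

/-- Under nonnegativity of the Ã(k), posynomiality of the entries of
K̃(k;·), nonnegativity of x(0), p > 0, and positivity of the trajectory entries
x_i(k;exp[z]) for 1 ≤ k ≤ T+1, the log-transformed ℓ^p performance objective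
z ↦ log((∑_{k=1}^{T+1} ∑_i x_i(k;exp[z])^p)^{1/p}) is convex on ℝ^m. -/
theorem performance_objective_log_convex
    (n m T : ℕ) (Atil : ℕ → Matrix (Fin n) (Fin n) ℝ)
    (Ktil : ℕ → (Fin m → ℝ) → Matrix (Fin n) (Fin n) ℝ)
    (hA : ∀ k ≤ T, ∀ i j, 0 ≤ Atil k i j)
    (hK : ∀ k ≤ T, ∀ i j, IsNonnegPosynomial m (fun θ => Ktil k θ i j))
    (x0 : Fin n → ℝ) (hx0 : ∀ i, 0 ≤ x0 i)
    (p : ℝ) (hp : 0 < p)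
    (hpos : ∀ z : Fin m → ℝ, ∀ k, 1 ≤ k → k ≤ T + 1 → ∀ i,
      0 < paramTraj n m Atil Ktil x0 k (fun i => Real.exp (z i)) i) :
    ConvexOn ℝ Set.univ
      (fun z : Fin m → ℝ =>
        Real.log ((∑ k ∈ Finset.Icc 1 (T + 1), ∑ i,
          (paramTraj n m Atil Ktil x0 k (fun i => Real.exp (z i)) i) ^ p) ^ (1 / p))) := by
  rcases isEmpty_or_nonempty (Fin n) with hn | hn
  · -- without states the objective is the constant `log (0 ^ (1 / p)) = log 0 = 0`
    simpa [zero_rpow (inv_ne_zero hp.ne')] using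
      (convexOn_const 0 convex_univ : ConvexOn ℝ Set.univ fun _ : Fin m → ℝ => (0 : ℝ))
  set S : (Fin m → ℝ) → ℝ := fun z => ∑ k ∈ Finset.Icc 1 (T + 1), ∑ i,
    paramTraj n m Atil Ktil x0 k (fun i => exp (z i)) i ^ p
  have hS : LogConvexOn Set.univ S := .sum convex_univ fun k hk => .sum convex_univ fun i _ =>
    (paramTraj_comp_exp_logConvexOn hA hK hx0 k (Finset.mem_Icc.1 hk).2 i).rpow hp.le
  have hS_pos : ∀ z, 0 < S z := fun z =>
    Finset.sum_pos (fun k hk => Finset.sum_pos (fun i _ =>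
      rpow_pos_of_pos (hpos z k (Finset.mem_Icc.1 hk).1 (Finset.mem_Icc.1 hk).2 i) p)
        Finset.univ_nonempty) ⟨1, by simp⟩
  exact ((hS.convexOn_log fun z _ => hS_pos z).smul (one_div_pos.2 hp).le).congr fun z _ =>
    (log_rpow (hS_pos z) _).symm
end

section
/- Let Ã(0), …, Ã(T) ∈ ℝ^{n×n} be entrywise nonnegative, let the entries of K̃(k;·) be nonnegative posynomials of θ ∈ ℝ^m_{>0}, let x(0) ∈ ℝ^n be entrywise nonnegative, let ℓ(k) ∈ ℝ^n be entrywise positive for k = 1, …, T+1, let ε > 0, let p > 0, and let J̄ > 0. Define x(k;θ) = (Ã(k−1)+K̃(k−1;θ))⋯(Ã(0)+K̃(0;θ))x(0) and assume x_i(k;exp[z]) > 0 for all z ∈ ℝ^m, 1 ≤ k ≤ T+1, and 1 ≤ i ≤ n. Then the feasible region of the log-transformed performance-constrained problem, { z ∈ ℝ^m : log(x(k;exp[z])^⊤ℓ(k)) < log ε for all 1 ≤ k ≤ T+1, and log((∑_{k=1}^{T+1}∑_{i=1}^n x_i(k;exp[z])^p)^{1/p}) ≤ log J̄ }, is a convex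 subset of ℝ^m. -/
open Real Finset

theorem Real.sum_rpow_mul_rpow_le_rpow_sum_mul_rpow_sum {ι : Type*} (s : Finset ι)
    {u v : ι → ℝ} (hu : ∀ i ∈ s, 0 ≤ u i) (hv : ∀ i ∈ s, 0 ≤ v i) {a b : ℝ}
    (ha : 0 < a) (hb : 0 < b) (hab : a + b = 1) :
    ∑ i ∈ s, u i ^ a * v i ^ b ≤ (∑ i ∈ s, u i) ^ a * (∑ i ∈ s, v i) ^ b := by
  have h := inner_le_Lp_mul_Lq_of_nonneg s (HolderConjugate.inv_inv ha hb hab)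
    (f := fun i => u i ^ a) (g := fun i => v i ^ b)
    (fun i hi => rpow_nonneg (hu i hi) a) (fun i hi => rpow_nonneg (hv i hi) b)
  have hu' : ∀ i ∈ s, (u i ^ a) ^ a⁻¹ = u i := fun i hi => rpow_rpow_inv (hu i hi) ha.ne'
  have hv' : ∀ i ∈ s, (v i ^ b) ^ b⁻¹ = v i := fun i hi => rpow_rpow_inv (hv i hi) hb.ne'
  rwa [sum_congr rfl hu', sum_congr rfl hv', one_div, one_div, inv_inv, inv_inv] at h

/-- Log-convexity of a nonnegative function, where `g x = 0` stands for `log (g x) = -∞`. -/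
def LogConvex {E : Type*} [AddCommGroup E] [Module ℝ E] (g : E → ℝ) : Prop :=
  (∀ x, 0 ≤ g x) ∧ ∀ ⦃x y : E⦄ ⦃a b : ℝ⦄, 0 < a → 0 < b → a + b = 1 →
    g (a • x + b • y) ≤ g x ^ a * g y ^ b

section LogConvex

variable {E : Type*} [AddCommGroup E] [Module ℝ E] {g h : E → ℝ}

theorem logConvex_const {c : ℝ} (hc : 0 ≤ c) : LogConvex fun _ : E => c :=
  ⟨fun _ => hc, fun _ _ a b _ _ hab =>
    le_of_eq (by rw [← rpow_add' hc (by rw [hab]; exact one_ne_zero), hab, rpow_one])⟩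

theorem ConvexOn.logConvex_exp {φ : E → ℝ} (hφ : ConvexOn ℝ Set.univ φ) :
    LogConvex fun x => exp (φ x) := by
  refine ⟨fun _ => (exp_pos _).le, fun x y a b ha hb hab => ?_⟩
  have hconv := hφ.2 (Set.mem_univ x) (Set.mem_univ y) ha.le hb.le hab
  rw [smul_eq_mul, smul_eq_mul] at hconv
  rw [← exp_mul, ← exp_mul, ← exp_add]
  exact exp_le_exp.2 (by linarith)

namespace LogConvex

theorem mul (hg : LogConvex g) (hh : LogConvex h) : LogConvex fun x => g x * h x := by
  refine ⟨fun x => mul_nonneg (hg.1 x) (hh.1 x), fun x y a b ha hb hab => ?_⟩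
  rw [mul_rpow (hg.1 x) (hh.1 x), mul_rpow (hg.1 y) (hh.1 y)]
  calc g (a • x + b • y) * h (a • x + b • y)
      ≤ (g x ^ a * g y ^ b) * (h x ^ a * h y ^ b) :=
        mul_le_mul (hg.2 ha hb hab) (hh.2 ha hb hab) (hh.1 _)
          (mul_nonneg (rpow_nonneg (hg.1 x) a) (rpow_nonneg (hg.1 y) b))
    _ = g x ^ a * h x ^ a * (g y ^ b * h y ^ b) := by ring

theorem sum {ι : Type*} {s : Finset ι} {g : ι → E → ℝ} (hg : ∀ i ∈ s, LogConvex (g i)) :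
    LogConvex fun x => ∑ i ∈ s, g i x := by
  refine ⟨fun x => sum_nonneg fun i hi => (hg i hi).1 x, fun x y a b ha hb hab => ?_⟩
  calc ∑ i ∈ s, g i (a • x + b • y) ≤ ∑ i ∈ s, g i x ^ a * g i y ^ b :=
        sum_le_sum fun i hi => (hg i hi).2 ha hb hab
    _ ≤ _ := sum_rpow_mul_rpow_le_rpow_sum_mul_rpow_sum s (fun i hi => (hg i hi).1 x)
        (fun i hi => (hg i hi).1 y) ha hb hab

theorem add (hg : LogConvex g) (hh : LogConvex h) : LogConvex fun x => g x + h x := by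
  simpa [Fin.sum_univ_two] using
    LogConvex.sum (s := univ) (g := ![g, h]) fun i _ => by fin_cases i <;> assumption

theorem rpow (hg : LogConvex g) {p : ℝ} (hp : 0 ≤ p) : LogConvex fun x => g x ^ p := by
  refine ⟨fun x => rpow_nonneg (hg.1 x) p, fun x y a b ha hb hab => ?_⟩
  calc g (a • x + b • y) ^ p ≤ (g x ^ a * g y ^ b) ^ p :=
        rpow_le_rpow (hg.1 _) (hg.2 ha hb hab) hp
    _ = (g x ^ p) ^ a * (g y ^ p) ^ b := by
        rw [mul_rpow (rpow_nonneg (hg.1 x) a) (rpow_nonneg (hg.1 y) b), ← rpow_mul (hg.1 x),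
          ← rpow_mul (hg.1 y), ← rpow_mul (hg.1 x), ← rpow_mul (hg.1 y), mul_comm a, mul_comm b]

theorem eq_zero_or_pos (hg : LogConvex g) : (∀ x, g x = 0) ∨ ∀ x, 0 < g x := by
  refine or_iff_not_imp_right.2 fun hneg x => ?_
  obtain ⟨w, hw⟩ := not_forall.1 hneg
  -- `x` is the midpoint of `w` and `2 • x - w`, and `g w = 0`.
  have hmid : g ((1 / 2 : ℝ) • w + (1 / 2 : ℝ) • ((2 : ℝ) • x - w))
      ≤ g w ^ (1 / 2 : ℝ) * g ((2 : ℝ) • x - w) ^ (1 / 2 : ℝ) :=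
    hg.2 (by norm_num) (by norm_num) (by norm_num)
  rw [show (1 / 2 : ℝ) • w + (1 / 2 : ℝ) • ((2 : ℝ) • x - w) = x by module,
    le_antisymm (not_lt.1 hw) (hg.1 w), zero_rpow (by norm_num), zero_mul] at hmid
  exact le_antisymm hmid (hg.1 x)

theorem convexOn_log (hg : LogConvex g) : ConvexOn ℝ Set.univ fun x => log (g x) := by
  rcases hg.eq_zero_or_pos with hzero | hpos
  · simpa [hzero] using convexOn_const (0 : ℝ) (convex_univ (𝕜 := ℝ) (E := E))
  refine convexOn_iff_forall_pos.2 ⟨convex_univ, fun x _ y _ a b ha hb hab => ?_⟩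
  calc log (g (a • x + b • y)) ≤ log (g x ^ a * g y ^ b) := log_le_log (hpos _) (hg.2 ha hb hab)
    _ = a * log (g x) + b * log (g y) := by
        rw [log_mul (rpow_pos_of_pos (hpos x) a).ne' (rpow_pos_of_pos (hpos y) b).ne',
          log_rpow (hpos x), log_rpow (hpos y)]

end LogConvex

end LogConvex

theorem IsNonnegPosynomial.logConvex_comp_exp {m : ℕ} {f : (Fin m → ℝ) → ℝ}
    (hf : IsNonnegPosynomial m f) : LogConvex fun z : Fin m → ℝ => f fun i => exp (z i) := by
  obtain ⟨N, c, a, hc, hfc⟩ := hf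
  have hexp : (fun z : Fin m → ℝ => f fun i => exp (z i))
      = fun z => ∑ j, c j * exp (a j ⬝ᵥ z) := by
    funext z
    rw [hfc _ fun i => exp_pos (z i)]
    simp only [dotProduct, exp_sum, ← exp_mul, mul_comm]
  rw [hexp]
  exact LogConvex.sum fun j _ => (logConvex_const (hc j)).mul
    ((dotProductBilin ℝ ℝ (a j)).convexOn convex_univ).logConvex_exp

theorem logConvex_paramTraj {n m T : ℕ} {Atil : ℕ → Matrix (Fin n) (Fin n) ℝ}
    {Ktil : ℕ → (Fin m → ℝ) → Matrix (Fin n) (Fin n) ℝ} {x0 : Fin n → ℝ}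
    (hA : ∀ k ≤ T, ∀ i j, 0 ≤ Atil k i j)
    (hK : ∀ k ≤ T, ∀ i j, IsNonnegPosynomial m fun θ => Ktil k θ i j)
    (hx0 : ∀ i, 0 ≤ x0 i) {k : ℕ} (hk : k ≤ T + 1) (i : Fin n) :
    LogConvex fun z : Fin m → ℝ => paramTraj n m Atil Ktil x0 k (fun i => exp (z i)) i := by
  induction k generalizing i with
  | zero => exact logConvex_const (hx0 i)
  | succ k ih =>
    have hkT : k ≤ T := by omega
    simp only [paramTraj, Matrix.mulVec, dotProduct, Matrix.add_apply]
    exact LogConvex.sum fun j _ =>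
      ((logConvex_const (hA k hkT i j)).add (hK k hkT i j).logConvex_comp_exp).mul (ih (by omega) j)

theorem performance_constrained_feasible_region_convex_general
    (n m T : ℕ) (Atil : ℕ → Matrix (Fin n) (Fin n) ℝ)
    (Ktil : ℕ → (Fin m → ℝ) → Matrix (Fin n) (Fin n) ℝ)
    (hA : ∀ k ≤ T, ∀ i j, 0 ≤ Atil k i j)
    (hK : ∀ k ≤ T, ∀ i j, IsNonnegPosynomial m (fun θ => Ktil k θ i j))
    (x0 : Fin n → ℝ) (hx0 : ∀ i, 0 ≤ x0 i)
    (ℓ : ℕ → Fin n → ℝ) (hℓ : ∀ k, 1 ≤ k → k ≤ T + 1 → ∀ i, 0 < ℓ k i)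
    (ε : ℝ) (p : ℝ) (hp : 0 < p) (Jbar : ℝ) :
    Convex ℝ
      { z : Fin m → ℝ |
        (∀ k, 1 ≤ k → k ≤ T + 1 →
          Real.log (∑ i, paramTraj n m Atil Ktil x0 k (fun i => Real.exp (z i)) i * ℓ k i)
            < Real.log ε) ∧
        Real.log ((∑ k ∈ Finset.Icc 1 (T + 1), ∑ i,
            (paramTraj n m Atil Ktil x0 k (fun i => Real.exp (z i)) i) ^ p) ^ (1 / p))
          ≤ Real.log Jbar } := by
  have htraj := @logConvex_paramTraj n m T Atil Ktil x0 hA hK hx0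
  have houtput : ∀ k, 1 ≤ k → k ≤ T + 1 → ConvexOn ℝ Set.univ fun z : Fin m → ℝ =>
      log (∑ i, paramTraj n m Atil Ktil x0 k (fun i => exp (z i)) i * ℓ k i) :=
    fun k hk1 hk2 => (LogConvex.sum fun i _ =>
      (htraj hk2 i).mul (logConvex_const (hℓ k hk1 hk2 i).le)).convexOn_log
  have hperf : ConvexOn ℝ Set.univ fun z : Fin m → ℝ =>
      log ((∑ k ∈ Icc 1 (T + 1), ∑ i,
        paramTraj n m Atil Ktil x0 k (fun i => exp (z i)) i ^ p) ^ (1 / p)) :=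
    ((LogConvex.sum fun k hk => LogConvex.sum fun i _ =>
      (htraj (mem_Icc.1 hk).2 i).rpow hp.le).rpow (by positivity)).convexOn_log
  intro x hx y hy a b ha hb hab
  exact ⟨fun k hk1 hk2 => ((houtput k hk1 hk2).convex_lt (log ε)
      ⟨Set.mem_univ x, hx.1 k hk1 hk2⟩ ⟨Set.mem_univ y, hy.1 k hk1 hk2⟩ ha hb hab).2,
    (hperf.convex_le (log Jbar) ⟨Set.mem_univ x, hx.2⟩ ⟨Set.mem_univ y, hy.2⟩ ha hb hab).2⟩

/-- The feasible region of the log-transformed performance-constrained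
finite-time control problem,
{ z : log(x(k;exp[z])^⊤ℓ(k)) < log ε for all 1 ≤ k ≤ T+1,
      log((∑_{k=1}^{T+1}∑_i x_i(k;exp[z])^p)^{1/p}) ≤ log J̄ },
is a convex subset of ℝ^m. -/
theorem performance_constrained_feasible_region_convex
    (n m T : ℕ) (Atil : ℕ → Matrix (Fin n) (Fin n) ℝ)
    (Ktil : ℕ → (Fin m → ℝ) → Matrix (Fin n) (Fin n) ℝ)
    (hA : ∀ k ≤ T, ∀ i j, 0 ≤ Atil k i j)
    (hK : ∀ k ≤ T, ∀ i j, IsNonnegPosynomial m (fun θ => Ktil k θ i j))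
    (x0 : Fin n → ℝ) (hx0 : ∀ i, 0 ≤ x0 i)
    (ℓ : ℕ → Fin n → ℝ) (hℓ : ∀ k, 1 ≤ k → k ≤ T + 1 → ∀ i, 0 < ℓ k i)
    (ε : ℝ) (hε : 0 < ε) (p : ℝ) (hp : 0 < p) (Jbar : ℝ) (hJbar : 0 < Jbar)
    (hpos : ∀ z : Fin m → ℝ, ∀ k, 1 ≤ k → k ≤ T + 1 → ∀ i,
      0 < paramTraj n m Atil Ktil x0 k (fun i => Real.exp (z i)) i) :
    Convex ℝ
      { z : Fin m → ℝ |
        (∀ k, 1 ≤ k → k ≤ T + 1 →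
          Real.log (∑ i, paramTraj n m Atil Ktil x0 k (fun i => Real.exp (z i)) i * ℓ k i)
            < Real.log ε) ∧
        Real.log ((∑ k ∈ Finset.Icc 1 (T + 1), ∑ i,
            (paramTraj n m Atil Ktil x0 k (fun i => Real.exp (z i)) i) ^ p) ^ (1 / p))
          ≤ Real.log Jbar } :=
  performance_constrained_feasible_region_convex_general n m T Atil Ktil hA hK x0 hx0 ℓ hℓ ε p hp
    Jbar
end
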